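/- For any p ∈ [0,1], define F(p) = −p·log₂ p − (1−p)·log₂(1−p) − 4p(1−p) (with 0·log₂ 0 := 0). Then F(p) ≥ 0 for all p ∈ [0,1], with equality if and only if p ∈ {0, 1/2, 1}. -/

import Mathlib

/-!
In nats, `F = g / log 2` with `g p = binEntropy p - 4 log 2 · p (1 - p)`, which is symmetric
about `1/2`, vanishes at `0`, `1/2`, `1`, and has `g' (1/2) = 0`. Its second derivative
`8 log 2 - 1 / (p (1 - p))` changes sign exactly once on `(0, 1/2)`, at some `c`. On `[c, 1/2]`
`g` is strictly convex, so it lies strictly above its horizontal tangent at `1/2`; in particular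
`g c > 0`. On `[0, c]` it is strictly concave, so it lies strictly above the chord from
`(0, 0)` to `(c, g c)`.
-/

/-- `F(p) = −p log₂ p − (1−p) log₂(1−p) − 4p(1−p)` (with `0 log₂ 0 = 0`,
as `Real.logb 2 0 = 0`). -/
noncomputable def Fpol (p : ℝ) : ℝ :=
  -p * Real.logb 2 p - (1 - p) * Real.logb 2 (1 - p) - 4 * p * (1 - p)

open Real Set

noncomputable def entropyGap (p : ℝ) : ℝ := binEntropy p - 4 * log 2 * (p * (1 - p))

lemma Fpol_eq_entropyGap_div (p : ℝ) : Fpol p = entropyGap p / log 2 := by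
  have : log 2 ≠ 0 := (log_pos one_lt_two).ne'
  simp only [Fpol, entropyGap, binEntropy, logb, log_inv]
  field_simp
  ring

@[simp] lemma entropyGap_one_sub (p : ℝ) : entropyGap (1 - p) = entropyGap p := by
  simp only [entropyGap, binEntropy_one_sub]
  ring

@[simp] lemma entropyGap_zero : entropyGap 0 = 0 := by simp [entropyGap]

@[simp] lemma entropyGap_one : entropyGap 1 = 0 := by simp [entropyGap]

@[simp] lemma entropyGap_two_inv : entropyGap 2⁻¹ = 0 := by
  rw [entropyGap, binEntropy_two_inv]
  ring

lemma continuous_entropyGap : Continuous entropyGap := by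
  unfold entropyGap; fun_prop

lemma hasDerivAt_entropyGap {p : ℝ} (hp₀ : p ≠ 0) (hp₁ : p ≠ 1) :
    HasDerivAt entropyGap (log (1 - p) - log p - 4 * log 2 * (1 - 2 * p)) p := by
  have hq : HasDerivAt (fun x : ℝ ↦ x * (1 - x)) (1 - 2 * p) p :=
    ((hasDerivAt_id' p).fun_mul ((hasDerivAt_id' p).const_sub 1)).congr_deriv (by ring)
  exact (hasDerivAt_binEntropy hp₀ hp₁).sub (hq.const_mul _)

lemma deriv2_entropyGap {p : ℝ} (hp₀ : 0 < p) (hp₁ : p < 1) :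
    deriv^[2] entropyGap p = 8 * log 2 - 1 / (p * (1 - p)) := by
  have hderiv : deriv entropyGap =ᶠ[nhds p]
      fun x ↦ log (1 - x) - log x - 4 * log 2 * (1 - 2 * x) := by
    filter_upwards [Ioo_mem_nhds hp₀ hp₁] with x hx
    exact (hasDerivAt_entropyGap hx.1.ne' hx.2.ne).deriv
  have h : HasDerivAt (fun x ↦ log (1 - x) - log x - 4 * log 2 * (1 - 2 * x))
      (-1 / (1 - p) - 1 / p + 8 * log 2) p := by
    have h1 := ((hasDerivAt_id' p).const_sub 1).log (sub_pos.2 hp₁).ne'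
    have h2 := (hasDerivAt_id' p).log hp₀.ne'
    have h3 := (((hasDerivAt_id' p).const_mul 2).const_sub 1).const_mul (4 * log 2)
    exact ((h1.fun_sub h2).fun_sub h3).congr_deriv (by ring)
  rw [Function.iterate_succ_apply', Function.iterate_one, hderiv.deriv_eq, h.deriv]
  field_simp [(sub_pos.2 hp₁).ne']
  ring

-- `c` is the inflection point of `entropyGap` in `(0, 1/2)` (see `deriv2_entropyGap`).
lemma exists_eight_log_two_mul_eq_one :
    ∃ c ∈ Ioo (0 : ℝ) 2⁻¹, 8 * log 2 * (c * (1 - c)) = 1 := by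
  have hlog : (1 : ℝ) < 8 * log 2 * (2⁻¹ * (1 - 2⁻¹)) := by
    linarith [log_two_gt_d9]
  exact intermediate_value_Ioo (by norm_num) (by fun_prop) ⟨by norm_num, hlog⟩

lemma entropyGap_pos_of_mem_Ico {c x : ℝ} (hc₀ : 0 ≤ c) (hc : 1 ≤ 8 * log 2 * (c * (1 - c)))
    (hx : x ∈ Ico c 2⁻¹) : 0 < entropyGap x := by
  have hlog : 0 < log 2 := log_pos one_lt_two
  have hconv : StrictConvexOn ℝ (Icc c 2⁻¹) entropyGap := by
    refine strictConvexOn_of_deriv2_pos (convex_Icc _ _) continuous_entropyGap.continuousOn ?_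
    intro y hy
    rw [interior_Icc] at hy
    have hy₀ : 0 < y := hc₀.trans_lt hy.1
    have hcy : c * (1 - c) < y * (1 - y) := by nlinarith [hy.1, hy.2]
    rw [deriv2_entropyGap hy₀ (by linarith [hy.2]), sub_pos,
      div_lt_iff₀ (mul_pos hy₀ (by linarith [hy.2]))]
    nlinarith [mul_lt_mul_of_pos_left hcy hlog]
  have hcrit : HasDerivAt entropyGap 0 2⁻¹ :=
    (hasDerivAt_entropyGap (by norm_num) (by norm_num)).congr_deriv (by norm_num)
  have hslope := hconv.slope_lt_of_hasDerivAt (Ico_subset_Icc_self hx)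
    (right_mem_Icc.2 (hx.1.trans hx.2.le)) hx.2 hcrit
  rw [slope_def_field, entropyGap_two_inv, div_lt_iff₀ (sub_pos.2 hx.2)] at hslope
  linarith

lemma entropyGap_pos_of_mem_Ioc {c x : ℝ} (hc₁ : c ≤ 2⁻¹)
    (hc : 8 * log 2 * (c * (1 - c)) ≤ 1) (hgc : 0 < entropyGap c) (hx : x ∈ Ioc 0 c) :
    0 < entropyGap x := by
  rcases hx.2.eq_or_lt with rfl | hxc
  · exact hgc
  have hlog : 0 < log 2 := log_pos one_lt_two
  have hconc : StrictConcaveOn ℝ (Icc 0 c) entropyGap := by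
    refine strictConcaveOn_of_deriv2_neg (convex_Icc _ _) continuous_entropyGap.continuousOn ?_
    intro y hy
    rw [interior_Icc] at hy
    have hyc : y * (1 - y) < c * (1 - c) := by nlinarith [hy.1, hy.2]
    rw [deriv2_entropyGap hy.1 (by linarith [hy.2]), sub_neg,
      lt_div_iff₀ (mul_pos hy.1 (by linarith [hy.2]))]
    nlinarith [mul_lt_mul_of_pos_left hyc hlog]
  have hc₀ : 0 < c := hx.1.trans hxc
  have := hconc.lt_on_openSegment (left_mem_Icc.2 hc₀.le) (right_mem_Icc.2 hc₀.le) hc₀.ne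
    (by rw [openSegment_eq_Ioo hc₀]; exact ⟨hx.1, hxc⟩)
  rwa [entropyGap_zero, min_eq_left hgc.le] at this

lemma entropyGap_pos_of_lt_two_inv {p : ℝ} (hp₀ : 0 < p) (hp : p < 2⁻¹) :
    0 < entropyGap p := by
  obtain ⟨c, ⟨hc₀, hc₁⟩, hc⟩ := exists_eight_log_two_mul_eq_one
  have hgc : 0 < entropyGap c := entropyGap_pos_of_mem_Ico hc₀.le hc.ge ⟨le_rfl, hc₁⟩
  rcases le_or_gt p c with hpc | hcp
  · exact entropyGap_pos_of_mem_Ioc hc₁.le hc.le hgc ⟨hp₀, hpc⟩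
  · exact entropyGap_pos_of_mem_Ico hc₀.le hc.ge ⟨hcp.le, hp⟩

lemma entropyGap_pos {p : ℝ} (hp₀ : 0 < p) (hp₁ : p < 1) (hp : p ≠ 2⁻¹) :
    0 < entropyGap p := by
  rcases hp.lt_or_gt with hlt | hgt
  · exact entropyGap_pos_of_lt_two_inv hp₀ hlt
  · rw [← entropyGap_one_sub]
    exact entropyGap_pos_of_lt_two_inv (by linarith) (by linarith)

/-- `F(p) ≥ 0` on `[0,1]`, with equality iff `p ∈ {0, 1/2, 1}`
(i.e. `Z(X)² ≤ H(X)` for `X ~ Ber(p)`). -/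
theorem stmt6 (p : ℝ) (hp : p ∈ Set.Icc (0 : ℝ) 1) :
    0 ≤ Fpol p ∧ (Fpol p = 0 ↔ p = 0 ∨ p = 1 / 2 ∨ p = 1) := by
  rw [Fpol_eq_entropyGap_div, one_div]
  by_cases hp' : p = 0 ∨ p = 2⁻¹ ∨ p = 1
  · have : entropyGap p = 0 := by rcases hp' with rfl | rfl | rfl <;> simp
    simp [this, hp']
  · push Not at hp'
    have hpos : 0 < entropyGap p / log 2 :=
      div_pos (entropyGap_pos (hp.1.lt_of_ne' hp'.1) (hp.2.lt_of_ne hp'.2.2) hp'.2.1)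
        (log_pos one_lt_two)
    exact ⟨hpos.le, iff_of_false hpos.ne' (by tauto)⟩
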